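/- arXiv:2411.05431 — 3 statements merged into one kernel-verified Lean document; each statement's English description precedes it below -/
import Mathlib

section
/- Let G be a group, H a subgroup of finite index in G, and N a normal subgroup of G contained in H. Then the transfer map is compatible with passage to the quotient by N: the composite of the transfer Ver_{G,H} : G/[G,G] → H/[H,H] with the natural map H/[H,H] → (H/N)/[H/N, H/N] equals the composite of the natural map G/[G,G] → (G/N)/[G/N, G/N] with the transfer Ver_{G/N, H/N} : (G/N)/[G/N,G/N] → (H/N)/[H/N,H/N]. -/
/-!
Let `f : G →* G'` be surjective with `f.ker ≤ H`. Then `f` induces a bijection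
`G ⧸ H ≃ G' ⧸ f(H)`, so the image `f '' T` of a left transversal `T` of `H` is a left transversal
of `f(H)` whose representative of the coset of `f t` is `f t`. Images of transversals commute with
left translation, and the coset-wise quotients `s⁻¹ t` in the definition of the transfer are
carried to each other by `f`, so `transfer ϕ (f g) = transfer (ϕ ∘ f) g`. Applied to `G → G ⧸ N`
and the abelianization maps, this is the compatibility of the transfer with quotients.
-/

open Subgroup QuotientGroup
open scoped Pointwise

namespace Subgroup

variable {G G' : Type*} [Group G] [Group G'] {f : G →* G'} {H : Subgroup G}

lemma map_mem_map_iff_of_ker_le (hker : f.ker ≤ H) {x : G} : f x ∈ H.map f ↔ x ∈ H := by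
  rw [← mem_comap, comap_map_eq, sup_eq_left.mpr hker]

variable (f H) in
def quotientMap : G ⧸ H → G' ⧸ H.map f :=
  Quotient.map' f fun x y hxy => by
    rw [leftRel_apply] at hxy ⊢
    simpa only [map_mul, map_inv] using mem_map_of_mem f hxy

@[simp]
lemma quotientMap_mk (g : G) : quotientMap f H (g : G ⧸ H) = (f g : G' ⧸ H.map f) := rfl

lemma quotientMap_bijective (hf : Function.Surjective f) (hker : f.ker ≤ H) :
    Function.Bijective (quotientMap f H) := by
  refine ⟨fun a b hab => ?_, fun q => ?_⟩
  · induction a using QuotientGroup.induction_on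
    induction b using QuotientGroup.induction_on
    rw [quotientMap_mk, quotientMap_mk, QuotientGroup.eq, ← map_inv, ← map_mul,
      map_mem_map_iff_of_ker_le hker] at hab
    exact QuotientGroup.eq.mpr hab
  · induction q using QuotientGroup.induction_on with | H g' => ?_
    obtain ⟨g, rfl⟩ := hf g'
    exact ⟨g, rfl⟩

lemma IsComplement.leftQuotientEquiv_mk_of_mem {S : Set G} (hS : IsComplement S H) {g : G}
    (hg : g ∈ S) : (hS.leftQuotientEquiv (g : G ⧸ H) : G) = g :=
  congrArg Subtype.val (hS.leftQuotientEquiv.apply_symm_apply ⟨g, hg⟩)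

lemma IsComplement.image_of_surjective {S : Set G} (hS : IsComplement S H)
    (hf : Function.Surjective f) (hker : f.ker ≤ H) : IsComplement (f '' S) (H.map f) := by
  rw [isComplement_subgroup_right_iff_bijective] at hS ⊢
  refine ⟨?_, fun q' => ?_⟩
  · rintro ⟨-, s, hs, rfl⟩ ⟨-, t, ht, rfl⟩ hst
    have : (s : G ⧸ H) = t := (quotientMap_bijective hf hker).1 hst
    exact Subtype.ext (congrArg (f ∘ Subtype.val) (hS.1 (a₁ := ⟨s, hs⟩) (a₂ := ⟨t, ht⟩) this))
  · obtain ⟨q, rfl⟩ := (quotientMap_bijective hf hker).2 q'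
    obtain ⟨⟨s, hs⟩, rfl⟩ := hS.2 q
    exact ⟨⟨f s, s, hs, rfl⟩, rfl⟩

lemma finiteIndex_map_of_surjective [H.FiniteIndex] (hf : Function.Surjective f) :
    (H.map f).FiniteIndex :=
  ⟨ne_zero_of_dvd_ne_zero FiniteIndex.index_ne_zero (H.index_map_dvd hf)⟩

variable (hf : Function.Surjective f) (hker : f.ker ≤ H)

def LeftTransversal.image (T : H.LeftTransversal) : (H.map f).LeftTransversal :=
  ⟨f '' T, T.2.image_of_surjective hf hker⟩

lemma LeftTransversal.image_leftQuotientEquiv (T : H.LeftTransversal) (q : G ⧸ H) :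
    ((T.image hf hker).2.leftQuotientEquiv (quotientMap f H q) : G') =
      f (T.2.leftQuotientEquiv q) := by
  conv_lhs => rw [← T.2.quotientGroupMk_leftQuotientEquiv q]
  exact (T.image hf hker).2.leftQuotientEquiv_mk_of_mem ⟨_, Subtype.prop _, rfl⟩

lemma LeftTransversal.image_smul (g : G) (T : H.LeftTransversal) :
    (g • T).image hf hker = f g • T.image hf hker :=
  Subtype.ext (Set.image_smul_distrib f g T)

lemma leftTransversals.diff_image {A : Type*} [CommGroup A] [H.FiniteIndex]
    [(H.map f).FiniteIndex] (ϕ : H.map f →* A) (S T : H.LeftTransversal) :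
    leftTransversals.diff ϕ (S.image hf hker) (T.image hf hker) =
      leftTransversals.diff (ϕ.comp (f.subgroupMap H)) S T := by
  let := H.fintypeQuotientOfFiniteIndex
  let := (H.map f).fintypeQuotientOfFiniteIndex
  refine (Fintype.prod_bijective _ (quotientMap_bijective hf hker) _ _ fun q => ?_).symm
  refine congrArg ϕ (Subtype.ext ?_)
  simp only [LeftTransversal.image_leftQuotientEquiv, ← map_inv, ← map_mul]
  rfl

end Subgroup

namespace MonoidHom

variable {G : Type*} [Group G] {H : Subgroup G} {A B : Type*} [CommGroup A] [CommGroup B]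
  [H.FiniteIndex]

lemma comp_transfer (ϕ : H →* A) (ψ : A →* B) : ψ.comp (transfer ϕ) = transfer (ψ.comp ϕ) := by
  ext g
  simp only [comp_apply, transfer_def _ default, leftTransversals.diff, map_prod]

lemma transfer_map_of_surjective {G' : Type*} [Group G'] {f : G →* G'}
    (hf : Function.Surjective f) (hker : f.ker ≤ H) [(H.map f).FiniteIndex]
    (ϕ : H.map f →* A) (g : G) :
    transfer ϕ (f g) = transfer (ϕ.comp (f.subgroupMap H)) g := by
  let T : H.LeftTransversal := default
  rw [transfer_def (ϕ.comp _) T, transfer_def ϕ (T.image hf hker), ← LeftTransversal.image_smul,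
    leftTransversals.diff_image]

end MonoidHom

/-- **Compatibility of the transfer with quotients.**
Let `H` be a subgroup of finite index in `G` and `N` a normal subgroup of `G`
with `N ≤ H`.  Then the composite of the transfer
`Ver_{G,H} : G/[G,G] → H/[H,H]` with the natural map
`H/[H,H] → (H/N)/[H/N,H/N]` equals the composite of the natural map
`G/[G,G] → (G/N)/[G/N,G/N]` with the transfer
`Ver_{G/N,H/N} : (G/N)/[G/N,G/N] → (H/N)/[H/N,H/N]`, where `H/N` is realized
as the image of `H` in `G/N`. -/
theorem transfer_comp_quotient_compat
    {G : Type*} [Group G] (H : Subgroup G) [H.FiniteIndex]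
    (N : Subgroup G) [N.Normal] (hNH : N ≤ H) :
    letI : (H.map (QuotientGroup.mk' N)).FiniteIndex :=
      ⟨by
        rw [Subgroup.index_map_eq H (QuotientGroup.mk'_surjective N)
          (by rw [QuotientGroup.ker_mk']; exact hNH)]
        exact Subgroup.FiniteIndex.index_ne_zero⟩
    (Abelianization.map ((QuotientGroup.mk' N).subgroupMap H)).comp
        (Abelianization.lift
          (MonoidHom.transfer (Abelianization.of : H →* _)))
      = (Abelianization.lift
          (MonoidHom.transfer
            (Abelianization.of : ↥(H.map (QuotientGroup.mk' N)) →* _))).comp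
          (Abelianization.map (QuotientGroup.mk' N)) := by
  have hker : (mk' N).ker ≤ H := by rwa [ker_mk']
  have := H.finiteIndex_map_of_surjective (mk'_surjective N)
  refine Abelianization.hom_ext _ _ (MonoidHom.ext fun g => ?_)
  simp only [MonoidHom.comp_apply, Abelianization.lift_apply_of, Abelianization.map_of]
  rw [← MonoidHom.comp_apply _ (MonoidHom.transfer _), MonoidHom.comp_transfer,
    MonoidHom.transfer_map_of_surjective (mk'_surjective N) hker]
  rfl
end

section
/- Let ℓ be a prime, J an abelian group (written additively), N a subgroup of J such that the quotient J/N has no ℓ-torsion (i.e., for x ∈ J, ℓx ∈ N implies x ∈ N), and S a subgroup of J with S ≤ N. Then for all natural numbers a and b, (ℓ^a·J + S) ∩ (ℓ^{a+b}·J + N) = ℓ^{a+b}·J + ℓ^a·N + S, where ℓ^k·J denotes the subgroup {ℓ^k x : x ∈ J} and + denotes the join of subgroups. -/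
/-- Let `ℓ` be a prime, `J` an abelian group, `N ≤ J` a subgroup such that `J/N`
has no `ℓ`-torsion, and `S ≤ N` a subgroup.  Then for all naturals `a` and `b`,
`(ℓ^a·J + S) ∩ (ℓ^(a+b)·J + N) = ℓ^(a+b)·J + ℓ^a·N + S`. -/
theorem inf_sup_pow_smul_sup_eq
    {J : Type*} [AddCommGroup J] {ℓ : ℕ} (hℓ : ℓ.Prime)
    (N S : AddSubgroup J)
    (hN : ∀ x : J, ℓ • x ∈ N → x ∈ N) (hS : S ≤ N) (a b : ℕ) :
    ((⊤ : AddSubgroup J).map (ℓ ^ a • AddMonoidHom.id J) ⊔ S) ⊓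
        ((⊤ : AddSubgroup J).map (ℓ ^ (a + b) • AddMonoidHom.id J) ⊔ N)
      = (⊤ : AddSubgroup J).map (ℓ ^ (a + b) • AddMonoidHom.id J) ⊔
          N.map (ℓ ^ a • AddMonoidHom.id J) ⊔ S := by
  have hNk : ∀ (k : ℕ) (x : J), ℓ ^ k • x ∈ N → x ∈ N := by
    intro k
    induction k with
    | zero => intro x h; simpa using h
    | succ k ih =>
      intro x h
      exact hN x (ih (ℓ • x) (by rwa [smul_smul, ← pow_succ]))
  have hmem : ∀ (k : ℕ) (x : J), x ∈ ((⊤ : AddSubgroup J).map (ℓ ^ k • AddMonoidHom.id J)) ↔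
      ∃ y : J, ℓ ^ k • y = x := by
    intro k x
    simp [AddSubgroup.mem_map]
  apply le_antisymm
  · intro x hx
    obtain ⟨hx1, hx2⟩ := AddSubgroup.mem_inf.mp hx
    obtain ⟨y, hy, s, hs, rfl⟩ := AddSubgroup.mem_sup.mp hx1
    obtain ⟨z, hz, n, hn, hzn⟩ := AddSubgroup.mem_sup.mp hx2
    obtain ⟨u, rfl⟩ := (hmem a y).mp hy
    obtain ⟨v, rfl⟩ := (hmem (a + b) z).mp hz
    have hw : ℓ ^ a • (u - ℓ ^ b • v) ∈ N := by
      have key : ℓ ^ a • u - ℓ ^ (a + b) • v = n - s := by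
        rw [sub_eq_sub_iff_add_eq_add, ← hzn]; abel
      have : ℓ ^ a • (u - ℓ ^ b • v) = n - s := by
        rw [smul_sub, smul_smul, ← pow_add]; exact key
      rw [this]
      exact sub_mem hn (hS hs)
    have hwN : u - ℓ ^ b • v ∈ N := hNk a _ hw
    have hxeq : ℓ ^ a • u + s = ℓ ^ (a + b) • v + ℓ ^ a • (u - ℓ ^ b • v) + s := by
      rw [smul_sub, smul_smul, ← pow_add]; abel
    rw [hxeq]
    refine AddSubgroup.add_mem_sup (AddSubgroup.add_mem_sup ?_ ?_) hs
    · exact (hmem (a + b) _).mpr ⟨v, rfl⟩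
    · exact AddSubgroup.mem_map.mpr ⟨_, hwN, rfl⟩
  · refine sup_le (sup_le ?_ ?_) ?_
    · refine le_inf (le_trans ?_ le_sup_left) le_sup_left
      rintro x hx
      obtain ⟨v, rfl⟩ := (hmem (a + b) x).mp hx
      exact (hmem a _).mpr ⟨ℓ ^ b • v, by rw [smul_smul, ← pow_add]⟩
    · refine le_inf (le_trans ?_ le_sup_left) (le_trans ?_ le_sup_right)
      · rintro x hx
        obtain ⟨w, hw, rfl⟩ := AddSubgroup.mem_map.mp hx
        exact (hmem a _).mpr ⟨w, rfl⟩
      · rintro x hx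
        obtain ⟨w, hw, rfl⟩ := AddSubgroup.mem_map.mp hx
        simpa using AddSubgroup.nsmul_mem N hw (ℓ ^ a)
    · exact le_inf le_sup_right (le_trans hS le_sup_right)
end

section
/- Let ℓ be a prime, J an abelian group (written additively), N a subgroup of J such that the quotient J/N has no ℓ-torsion (i.e., for x ∈ J, ℓx ∈ N implies x ∈ N), and S a subgroup of J with S ≤ N. Assume moreover that ℓ^a·N ≤ S, i.e., the quotient N/S is annihilated by ℓ^a. Then for every natural number b, (ℓ^a·J + S) ∩ (ℓ^{a+b}·J + N) = ℓ^{a+b}·J + S. -/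
/-- Let `ℓ` be a prime, `J` an abelian group, `N ≤ J` a subgroup such that `J/N`
has no `ℓ`-torsion, and `S ≤ N` a subgroup with `ℓ^a·N ≤ S` (i.e. `N/S` is
annihilated by `ℓ^a`).  Then for every natural number `b`,
`(ℓ^a·J + S) ∩ (ℓ^(a+b)·J + N) = ℓ^(a+b)·J + S`. -/
theorem inf_sup_pow_smul_eq_of_annihilated
    {J : Type*} [AddCommGroup J] {ℓ : ℕ} (hℓ : ℓ.Prime)
    (N S : AddSubgroup J)
    (hN : ∀ x : J, ℓ • x ∈ N → x ∈ N) (hS : S ≤ N) (a : ℕ)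
    (hann : N.map (ℓ ^ a • AddMonoidHom.id J) ≤ S) (b : ℕ) :
    ((⊤ : AddSubgroup J).map (ℓ ^ a • AddMonoidHom.id J) ⊔ S) ⊓
        ((⊤ : AddSubgroup J).map (ℓ ^ (a + b) • AddMonoidHom.id J) ⊔ N)
      = (⊤ : AddSubgroup J).map (ℓ ^ (a + b) • AddMonoidHom.id J) ⊔ S := by
  have haux : ∀ (k : ℕ) (y : J), ℓ ^ k • y ∈ N → y ∈ N := by
    intro k
    induction k with
    | zero => intro y hy; simpa using hy
    | succ k ih =>
      intro y hy
      apply hN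
      apply ih
      rw [← mul_smul, ← pow_succ]
      exact hy
  apply le_antisymm
  · intro x hx
    rw [AddSubgroup.mem_inf] at hx
    obtain ⟨hx1, hx2⟩ := hx
    rw [AddSubgroup.mem_sup] at hx1 hx2 ⊢
    obtain ⟨p, hp, s, hs, rfl⟩ := hx1
    obtain ⟨j, -, rfl⟩ := AddSubgroup.mem_map.1 hp
    obtain ⟨q, hq, n, hn, heq⟩ := hx2
    obtain ⟨j', -, rfl⟩ := AddSubgroup.mem_map.1 hq
    simp only [AddMonoidHom.smul_apply, AddMonoidHom.id_apply] at *
    have ht : ℓ ^ a • (j - ℓ ^ b • j') ∈ N := by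
      have : ℓ ^ a • (j - ℓ ^ b • j') = n + (-s) := by
        rw [smul_sub, ← mul_smul, ← pow_add]
        have := heq.symm
        abel_nf
        abel_nf at this
        linear_combination (norm := abel) this
      rw [this]
      exact N.add_mem hn (N.neg_mem (hS hs))
    have htN : j - ℓ ^ b • j' ∈ N := haux a _ ht
    have htS : ℓ ^ a • (j - ℓ ^ b • j') ∈ S := by
      apply hann
      exact AddSubgroup.mem_map.2 ⟨_, htN, by simp⟩
    refine ⟨ℓ ^ (a + b) • j', AddSubgroup.mem_map.2 ⟨j', trivial, by simp⟩,
      ℓ ^ a • (j - ℓ ^ b • j') + s, S.add_mem htS hs, ?_⟩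
    rw [smul_sub, ← mul_smul, ← pow_add]
    abel
  · refine le_inf (sup_le_sup_right ?_ S) (sup_le_sup_left hS _)
    rintro x hx
    obtain ⟨j, -, rfl⟩ := AddSubgroup.mem_map.1 hx
    refine AddSubgroup.mem_map.2 ⟨ℓ ^ b • j, trivial, ?_⟩
    simp [← mul_smul, ← pow_add]
end
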